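/- (Narrow band error.) With the above notation, ∫_{-W}^{W} |(1/K) ρ_K(N,W;ξ) - (1/(2W)) | dξ ≤ 2/K + (1 - (1/K) ∑_{k=0}^{K-1} λ_k), using the pointwise bound ρ_K ≤ N and the identity λ_k = ∫_{-W}^{W} |U_k|^2. -/

import Mathlib

open Real Finset

/-- The Dirichlet kernel `D_N(x) = sin(Nπx)/sin(πx)`. -/
noncomputable def dirichletKernel (N : ℕ) (x : ℝ) : ℝ :=
  Real.sin (N * Real.pi * x) / Real.sin (Real.pi * x)

/-- `U` belongs to the space `P_N` of trigonometric polynomials spanned by the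
exponentials `e^{2πi((-N+1)/2 + j)x}`, `0 ≤ j ≤ N-1`. -/
def IsTrigPoly (N : ℕ) (U : ℝ → ℂ) : Prop :=
  ∃ c : Fin N → ℂ, ∀ x : ℝ,
    U x = ∑ j : Fin N,
      c j * Complex.exp (2 * Real.pi * Complex.I * ((-(N:ℂ) + 1)/2 + (j:ℕ)) * x)

/-- `U ∈ P_N` is an eigenfunction of the Toeplitz operator `H_W^N` with
eigenvalue `lam`, i.e. `∫_{-W}^{W} D_N(ξ-ξ') U(ξ') dξ' = lam · U(ξ)`. -/
def IsSlepianEigen (N : ℕ) (W : ℝ) (lam : ℝ) (U : ℝ → ℂ) : Prop :=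
  IsTrigPoly N U ∧
    ∀ x : ℝ, (∫ y in (-W)..W, (dirichletKernel N (x - y) : ℂ) * U y) = (lam : ℂ) * U x

/-- The family `U_0, …, U_{N-1}` is orthonormal in `L²(I)`, `I = [-1/2,1/2]`. -/
def IsOrthonormalOnI (N : ℕ) (U : ℕ → ℝ → ℂ) : Prop :=
  ∀ j k, j < N → k < N →
    (∫ x in (-(1:ℝ)/2)..(1/2), U j x * (starRingEnd ℂ) (U k x))
      = if j = k then 1 else 0

/-!
Put `f = ρ_K / K - 1/(2W)`. From `ρ_K ≤ N` and `2NW < K + 1` we get `f ≤ M := 1/(2WK)`, and any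
`f ≤ M` with `M ≥ 0` satisfies `|f| ≤ 2M - f`. Integrating over `[-W, W]`, the constant gives
`2/K`, and `∫ f = (1/K) ∑ λ_k - 1` because `λ_k = ∫_{-W}^{W} |U_k|²`.
-/

open MeasureTheory

theorem IsTrigPoly.continuous {N : ℕ} {U : ℝ → ℂ} (hU : IsTrigPoly N U) : Continuous U := by
  obtain ⟨c, hc⟩ := hU
  rw [funext hc]
  fun_prop

theorem floor_two_mul_mul_le (N : ℕ) {W : ℝ} (hW : W ≤ 1 / 2) : ⌊2 * (N : ℝ) * W⌋₊ ≤ N :=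
  Nat.floor_le_of_le <| by nlinarith [(N.cast_nonneg : (0 : ℝ) ≤ N)]

theorem div_sub_one_div_two_mul_le {x W : ℝ} {K : ℕ} (hW : 0 < W) (hK : 0 < K)
    (hx : 2 * x * W < K + 1) : x / K - 1 / (2 * W) ≤ 1 / (2 * W * K) := by
  have hK' : (0 : ℝ) < K := by exact_mod_cast hK
  rw [div_sub_div _ _ hK'.ne' (by positivity), div_le_div_iff₀ (by positivity) (by positivity)]
  nlinarith [mul_pos (mul_pos hW hK') hK']

theorem intervalIntegral.integral_abs_le_of_le_const {f : ℝ → ℝ} {a b M : ℝ} (hab : a ≤ b)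
    (hf : IntervalIntegrable f volume a b) (hM : 0 ≤ M) (hfM : ∀ x ∈ Set.Icc a b, f x ≤ M) :
    ∫ x in a..b, |f x| ≤ 2 * M * (b - a) - ∫ x in a..b, f x := by
  calc ∫ x in a..b, |f x|
      ≤ ∫ x in a..b, (2 * M - f x) :=
        integral_mono_on hab hf.abs (intervalIntegrable_const.sub hf) fun x hx =>
          abs_le.2 ⟨by linarith, by linarith [hfM x hx]⟩
    _ = 2 * M * (b - a) - ∫ x in a..b, f x := by
        rw [integral_sub intervalIntegrable_const hf, integral_const, smul_eq_mul, mul_comm]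

theorem integral_abs_average_sub_le {φ : ℕ → ℝ → ℝ} {K : ℕ} {N W : ℝ} (hW : 0 < W) (hK : 0 < K)
    (hφ : ∀ k ∈ range K, IntervalIntegrable (φ k) volume (-W) W)
    (hsum : ∀ ξ, ∑ k ∈ range K, φ k ξ ≤ N) (hN : 2 * N * W < K + 1) :
    ∫ ξ in (-W)..W, |(1 / (K : ℝ)) * ∑ k ∈ range K, φ k ξ - 1 / (2 * W)|
      ≤ 2 / K + (1 - (1 / (K : ℝ)) * ∑ k ∈ range K, ∫ ξ in (-W)..W, φ k ξ) := by
  have hW0 : W ≠ 0 := hW.ne'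
  have hK0 : (K : ℝ) ≠ 0 := Nat.cast_ne_zero.2 hK.ne'
  have hsum_int : IntervalIntegrable (fun ξ => ∑ k ∈ range K, φ k ξ) volume (-W) W :=
    sum_fn (range K) φ ▸ IntervalIntegrable.sum _ hφ
  have hexcess : ∀ ξ, (1 / (K : ℝ)) * ∑ k ∈ range K, φ k ξ - 1 / (2 * W) ≤ 1 / (2 * W * K) :=
    fun ξ => by
      have hmean : (1 / (K : ℝ)) * ∑ k ∈ range K, φ k ξ ≤ N / K := by
        rw [one_div_mul_eq_div]; gcongr; exact hsum ξ
      linarith [div_sub_one_div_two_mul_le hW hK hN]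
  have hmass : ∫ ξ in (-W)..W, (1 / (K : ℝ)) * ∑ k ∈ range K, φ k ξ - 1 / (2 * W)
      = (1 / (K : ℝ)) * (∑ k ∈ range K, ∫ ξ in (-W)..W, φ k ξ) - 1 := by
    rw [intervalIntegral.integral_sub (hsum_int.const_mul _) intervalIntegrable_const,
      intervalIntegral.integral_const_mul, intervalIntegral.integral_finsetSum hφ,
      intervalIntegral.integral_const, smul_eq_mul]
    field_simp
    ring
  calc _ ≤ 2 * (1 / (2 * W * K)) * (W - -W)
        - ((1 / (K : ℝ)) * (∑ k ∈ range K, ∫ ξ in (-W)..W, φ k ξ) - 1) :=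
        hmass ▸ intervalIntegral.integral_abs_le_of_le_const (by linarith)
          ((hsum_int.const_mul _).sub intervalIntegrable_const) (by positivity)
          fun ξ _ => hexcess ξ
    _ = _ := by field_simp; ring

theorem narrow_band_error_general (N : ℕ) (W : ℝ)
    (hW : W ∈ Set.Ioo (0:ℝ) (1/2)) (lam : ℕ → ℝ) (U : ℕ → ℝ → ℂ)
    (hEig : ∀ k, k < N → IsSlepianEigen N W (lam k) (U k))
    (hband : ∀ k, k < N → lam k = ∫ x in (-W)..W, ‖U k x‖^2)
    (hrho : ∀ ξ : ℝ, (∑ k ∈ Finset.range N, ‖U k ξ‖^2) ≤ N)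
    (K : ℕ) (hK : K = ⌊2 * (N : ℝ) * W⌋₊) (hK1 : 1 ≤ K) :
    (∫ ξ in (-W)..W,
        |(1 / (K : ℝ)) * (∑ k ∈ Finset.range K, ‖U k ξ‖^2) - 1 / (2 * W)|)
      ≤ 2 / K + (1 - (1 / (K : ℝ)) * ∑ k ∈ Finset.range K, lam k) := by
  obtain ⟨hW0, hW2⟩ := hW
  have hlt : ∀ k ∈ range K, k < N := fun k hk =>
    (mem_range.1 hk).trans_le (hK ▸ floor_two_mul_mul_le N hW2.le)
  rw [sum_congr rfl fun k hk => hband k (hlt k hk)]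
  refine integral_abs_average_sub_le hW0 hK1
    (fun k hk => ((hEig k (hlt k hk)).1.continuous.norm.pow 2).intervalIntegrable _ _)
    (fun ξ => ?_) (hK ▸ Nat.lt_floor_add_one _)
  calc ∑ k ∈ range K, ‖U k ξ‖ ^ 2 ≤ ∑ k ∈ range N, ‖U k ξ‖ ^ 2 :=
        sum_le_sum_of_subset_of_nonneg (fun k hk => mem_range.2 (hlt k hk))
          fun _ _ _ => by positivity
    _ ≤ N := hrho ξ

/-- **Narrow band error.** Inside the band,
`∫_{-W}^{W} |(1/K) ρ_K(N,W;ξ) - 1/(2W)| dξ ≤ 2/K + (1 - (1/K) ∑_{k<K} λ_k)`,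
using the pointwise bound `ρ_K ≤ N` and the identity `λ_k = ∫_{-W}^{W}|U_k|²`. -/
theorem narrow_band_error (N : ℕ) (hN : 2 ≤ N) (W : ℝ)
    (hW : W ∈ Set.Ioo (0:ℝ) (1/2)) (lam : ℕ → ℝ) (U : ℕ → ℝ → ℂ)
    (hEig : ∀ k, k < N → IsSlepianEigen N W (lam k) (U k))
    (hON : IsOrthonormalOnI N U)
    (hlam01 : ∀ k, k < N → 0 ≤ lam k ∧ lam k ≤ 1)
    (hband : ∀ k, k < N → lam k = ∫ x in (-W)..W, ‖U k x‖^2)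
    (hrho : ∀ ξ : ℝ, (∑ k ∈ Finset.range N, ‖U k ξ‖^2) ≤ N)
    (K : ℕ) (hK : K = ⌊2 * (N : ℝ) * W⌋₊) (hK1 : 1 ≤ K) :
    (∫ ξ in (-W)..W,
        |(1 / (K : ℝ)) * (∑ k ∈ Finset.range K, ‖U k ξ‖^2) - 1 / (2 * W)|)
      ≤ 2 / K + (1 - (1 / (K : ℝ)) * ∑ k ∈ Finset.range K, lam k) :=
  narrow_band_error_general N W hW lam U hEig hband hrho K hK hK1
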